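/- For every n ≥ 3, every element X of the braid group B_n can be written X = Δ^{2k}·M for some integer k ∈ ℤ and some positive braid M, where Δ is the Garside half-twist element. -/

import Mathlib

namespace Braid

/-- The braid relations on `n` strands: generators `0, …, n-2` stand for `σ₁, …, σ_{n-1}`. -/
def braidRels (n : ℕ) : Set (FreeGroup (Fin (n - 1))) :=
  { r | (∃ i j : Fin (n - 1), (i : ℕ) + 2 ≤ (j : ℕ) ∧
          r = FreeGroup.of i * FreeGroup.of j * (FreeGroup.of i)⁻¹ * (FreeGroup.of j)⁻¹) ∨
        (∃ i j : Fin (n - 1), (j : ℕ) = (i : ℕ) + 1 ∧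
          r = FreeGroup.of i * FreeGroup.of j * FreeGroup.of i *
              (FreeGroup.of j * FreeGroup.of i * FreeGroup.of j)⁻¹) }

/-- The braid group `B_n`, presented by `σ₁, …, σ_{n-1}` and the braid relations. -/
abbrev BraidGroup (n : ℕ) := PresentedGroup (braidRels n)

/-- The standard generator `σ i` of `B_n` (1-indexed); junk value `1` out of range. -/
def s (n : ℕ) (i : ℕ) : BraidGroup n :=
  if h : 1 ≤ i ∧ i ≤ n - 1 then PresentedGroup.of (⟨i - 1, by omega⟩ : Fin (n - 1)) else 1

/-- The Garside half-twist `Δ = (σ₁)(σ₂σ₁)(σ₃σ₂σ₁)⋯(σ_{n-1}σ_{n-2}⋯σ₁)` in `B_n`. -/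
def halfTwist (n : ℕ) : BraidGroup n :=
  ((List.range (n - 1)).map
    (fun r => (((List.range (r + 1)).reverse).map (fun k => s n (k + 1))).prod)).prod

/-- The submonoid of positive braids of `B_n`: the monoid generated by `σ₁, …, σ_{n-1}`. -/
def positive (n : ℕ) : Submonoid (BraidGroup n) :=
  Submonoid.closure (s n '' Set.Icc 1 (n - 1))

/-- The extended generators `ₐσᵢ` of `B_n`:
`₀σᵢ = σᵢ`, `₁σᵢ = Δ·σᵢ⁻¹`, `₂σᵢ = σ_{n-i}`, `₃σᵢ = Δ·σ_{n-i}⁻¹`. -/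
def es (n : ℕ) (a : ZMod 4) (i : ℕ) : BraidGroup n :=
  if a = 0 then s n i
  else if a = 1 then halfTwist n * (s n i)⁻¹
  else if a = 2 then s n (n - i)
  else halfTwist n * (s n (n - i))⁻¹

/-- An extended letter `ₐσᵢ^{e}` is coded as `(a, i, e)`, where `e = true` means
exponent `+1` (a positive letter) and `e = false` means exponent `-1` (a negative letter). -/
abbrev ELetter : Type := ZMod 4 × ℕ × Bool

/-- The element of `B_n` represented by an extended letter. -/
def eletterProd (n : ℕ) (x : ELetter) : BraidGroup n :=
  if x.2.2 then es n x.1 x.2.1 else (es n x.1 x.2.1)⁻¹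

/-- The element of `B_n` represented by an extended word. -/
def eprod (n : ℕ) (W : List ELetter) : BraidGroup n :=
  (W.map (eletterProd n)).prod

/-- The element of `B_n` represented by a positive extended word,
coded as a list of pairs `(a, i)` standing for the letters `ₐσᵢ` (no inverses). -/
def eposProd (n : ℕ) (P : List (ZMod 4 × ℕ)) : BraidGroup n :=
  (P.map (fun x => es n x.1 x.2)).prod

/-- A standard word is a list of pairs `(i, e)` standing for the letters `σᵢ^{±1}`;
this is the element of `B_n` it represents. -/
def sprod (n : ℕ) (V : List (ℕ × Bool)) : BraidGroup n :=
  (V.map (fun x => if x.2 then s n x.1 else (s n x.1)⁻¹)).prod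

/-- The element of `B_n` represented by a positive standard word (a list of indices). -/
def posProd (n : ℕ) (P : List ℕ) : BraidGroup n :=
  (P.map (s n)).prod

/-- The shift `sh(d, ₐσⱼ^{e}) = ₍ₐ₊d₎σⱼ^{f}`, with `f = e` if `d ∈ {0,2}` and
`f = -e` if `d ∈ {1,3}`. -/
def sh (d : ZMod 4) (x : ELetter) : ELetter :=
  (x.1 + d, x.2.1, if d = 0 ∨ d = 2 then x.2.2 else !x.2.2)

/-- One step of the inductive definition of the separation of an extended word. -/
def sepStep (t : List (ZMod 4) × ZMod 4 × List (ZMod 4)) (x : ELetter) :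
    List (ZMod 4) × ZMod 4 × List (ZMod 4) :=
  if x.2.2 = false then (t.1, t.2.1, t.2.2 ++ [-t.2.1])
  else
    match t.2.2 with
    | [] => (t.1 ++ [0], t.2.1, [])
    | a :: L'' => (t.1 ++ [a + t.2.1 + 1], t.2.1 + 2, L'' ++ [3 - t.2.1])

/-- The separation `(L, δ, L')` of an extended word, defined inductively from the left. -/
def separation (W : List ELetter) : List (ZMod 4) × ZMod 4 × List (ZMod 4) :=
  W.foldl sepStep ([], 0, [])

/-- The bishift `SH2(L, δ, L', W)`: the first `|L|` letters of `W` are shifted by the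
entries of `L`, the remaining letters are shifted by `δ +` the entries of `L'`. -/
def SH2 (L : List (ZMod 4)) (δ : ZMod 4) (L' : List (ZMod 4)) (W : List ELetter) :
    List ELetter :=
  List.zipWith sh L (W.take L.length) ++
    List.zipWith sh (L'.map (fun d => δ + d)) (W.drop L.length)

/-!
Let `Δₘ` be the half twist of the first `m + 1` strands. The two factorizations
`Δₘ₊₁ = Δₘ · σₘ₊₁ ⋯ σ₁ = σ₁ ⋯ σₘ₊₁ · Δₘ` give, by induction on `m`, the conjugation rule
`σᵢ Δ = Δ σₙ₋ᵢ`, hence `Δ²` commutes with every generator, and show that `Δ` is right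
divisible by every `σᵢ` in the positive monoid, hence `Δ² σᵢ⁻¹ = Δ · Δ σᵢ⁻¹` is positive.
Now build `X` from the left out of generators and their inverses:
`σᵢ · Δ^{2k} M = Δ^{2k} (σᵢ M)` and `σᵢ⁻¹ · Δ^{2k} M = Δ^{2(k-1)} (Δ² σᵢ⁻¹ M)`.
-/

section

variable {n : ℕ}

lemma commute_of_of {i j : Fin (n - 1)} (h : (i : ℕ) + 2 ≤ j) :
    Commute (PresentedGroup.of i : BraidGroup n) (PresentedGroup.of j) :=
  commutatorElement_eq_one_iff_commute.mp <| by
    have h := PresentedGroup.one_of_mem (rels := braidRels n) (Or.inl ⟨i, j, h, rfl⟩)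
    simp only [map_mul, map_inv] at h
    exact h

lemma of_mul_of_mul_of {i j : Fin (n - 1)} (h : (j : ℕ) = i + 1) :
    (PresentedGroup.of i : BraidGroup n) * PresentedGroup.of j * PresentedGroup.of i =
      PresentedGroup.of j * PresentedGroup.of i * PresentedGroup.of j :=
  PresentedGroup.mk_eq_mk_of_mul_inv_mem (Or.inr ⟨i, j, h, rfl⟩)

lemma s_eq_of {i : ℕ} (h1 : 1 ≤ i) (h2 : i ≤ n - 1) :
    s n i = PresentedGroup.of (⟨i - 1, by omega⟩ : Fin (n - 1)) :=
  dif_pos ⟨h1, h2⟩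

lemma of_eq_s (j : Fin (n - 1)) : PresentedGroup.of j = s n (j + 1) := by
  rw [s_eq_of (by omega) (by omega)]
  rfl

lemma s_eq_one {i : ℕ} (h : i = 0 ∨ n - 1 < i) : s n i = 1 :=
  dif_neg (by omega)

lemma commute_s_s {i j : ℕ} (h : i + 2 ≤ j) : Commute (s n i) (s n j) := by
  rcases Nat.eq_zero_or_pos i with hi | hi
  · simp [s_eq_one (.inl hi)]
  rcases le_or_gt j (n - 1) with hj | hj
  · rw [s_eq_of hi (by omega), s_eq_of (by omega) hj]
    exact commute_of_of (by simp; omega)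
  · simp [s_eq_one (.inr hj)]

lemma s_mul_s_mul_s {i : ℕ} (h1 : 1 ≤ i) (h2 : i + 1 ≤ n - 1) :
    s n i * s n (i + 1) * s n i = s n (i + 1) * s n i * s n (i + 1) := by
  rw [s_eq_of h1 (by omega), s_eq_of (by omega) h2]
  exact of_mul_of_mul_of (by simp; omega)

lemma s_mem_positive {i : ℕ} (h1 : 1 ≤ i) (h2 : i ≤ n - 1) : s n i ∈ positive n :=
  Submonoid.subset_closure ⟨i, ⟨h1, h2⟩, rfl⟩

/-- `σₘ ⋯ σ₁` -/
def sigmaDesc (n m : ℕ) : BraidGroup n :=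
  ((List.range m).reverse.map fun k => s n (k + 1)).prod

/-- `σ₁ ⋯ σₘ` -/
def sigmaAsc (n m : ℕ) : BraidGroup n :=
  ((List.range m).map fun k => s n (k + 1)).prod

/-- The half twist of the first `m + 1` strands. -/
def partialHalfTwist (n m : ℕ) : BraidGroup n :=
  ((List.range m).map fun r => sigmaDesc n (r + 1)).prod

lemma halfTwist_eq_partialHalfTwist : halfTwist n = partialHalfTwist n (n - 1) := rfl

@[simp] lemma sigmaDesc_zero : sigmaDesc n 0 = 1 := rfl
@[simp] lemma sigmaAsc_zero : sigmaAsc n 0 = 1 := rfl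
@[simp] lemma partialHalfTwist_zero : partialHalfTwist n 0 = 1 := rfl

lemma sigmaDesc_succ (m : ℕ) : sigmaDesc n (m + 1) = s n (m + 1) * sigmaDesc n m := by
  simp [sigmaDesc, List.range_succ]

lemma sigmaAsc_succ (m : ℕ) : sigmaAsc n (m + 1) = sigmaAsc n m * s n (m + 1) := by
  simp [sigmaAsc, List.range_succ]

lemma partialHalfTwist_succ (m : ℕ) :
    partialHalfTwist n (m + 1) = partialHalfTwist n m * sigmaDesc n (m + 1) := by
  simp [partialHalfTwist, List.range_succ]

lemma commute_s_sigmaDesc {j m : ℕ} (h : m + 2 ≤ j) : Commute (s n j) (sigmaDesc n m) :=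
  Commute.list_prod_right _ _ <| by
    simpa using fun k hk => (commute_s_s (by omega)).symm

lemma commute_s_sigmaAsc {j m : ℕ} (h : m + 2 ≤ j) : Commute (s n j) (sigmaAsc n m) :=
  Commute.list_prod_right _ _ <| by
    simpa using fun k hk => (commute_s_s (by omega)).symm

lemma commute_s_partialHalfTwist {j m : ℕ} (h : m + 2 ≤ j) :
    Commute (s n j) (partialHalfTwist n m) :=
  Commute.list_prod_right _ _ <| by
    simpa using fun r hr => commute_s_sigmaDesc (by omega)

lemma s_mul_sigmaDesc {j m : ℕ} (h1 : 1 ≤ j) (h2 : j + 1 ≤ m) (h3 : m ≤ n - 1) :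
    s n j * sigmaDesc n m = sigmaDesc n m * s n (j + 1) := by
  induction m with
  | zero => omega
  | succ m ih =>
    rcases Nat.lt_or_ge j m with hj | hj
    · rw [sigmaDesc_succ, ← mul_assoc, (commute_s_s (by omega)).eq, mul_assoc,
        ih (by omega) (by omega), mul_assoc]
    · obtain rfl : j = m := by omega
      obtain ⟨k, rfl⟩ : ∃ k, j = k + 1 := ⟨j - 1, by omega⟩
      rw [sigmaDesc_succ, sigmaDesc_succ]
      calc s n (k + 1) * (s n (k + 1 + 1) * (s n (k + 1) * sigmaDesc n k))
          = s n (k + 1) * s n (k + 2) * s n (k + 1) * sigmaDesc n k := by simp only [mul_assoc]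
        _ = s n (k + 2) * s n (k + 1) * (s n (k + 2) * sigmaDesc n k) := by
          rw [s_mul_s_mul_s (by omega) h3, mul_assoc]
        _ = _ := by rw [(commute_s_sigmaDesc le_rfl).eq]; simp only [mul_assoc]

lemma s_mul_sigmaAsc (m : ℕ) (h : m + 2 ≤ n - 1) :
    s n (m + 2) * sigmaAsc n (m + 2) = sigmaAsc n (m + 2) * s n (m + 1) := by
  rw [sigmaAsc_succ, sigmaAsc_succ]
  calc s n (m + 2) * (sigmaAsc n m * s n (m + 1) * s n (m + 1 + 1))
      = sigmaAsc n m * (s n (m + 2) * s n (m + 1) * s n (m + 2)) := by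
        rw [← mul_assoc, ← mul_assoc, (commute_s_sigmaAsc le_rfl).eq]; simp only [mul_assoc]
    _ = _ := by rw [← s_mul_s_mul_s (by omega) h]; simp only [mul_assoc]

lemma sigmaAsc_mul_partialHalfTwist (m : ℕ) :
    sigmaAsc n (m + 1) * partialHalfTwist n m = partialHalfTwist n m * sigmaDesc n (m + 1) := by
  induction m with
  | zero => simp [sigmaAsc_succ, sigmaDesc_succ]
  | succ m ih =>
    calc sigmaAsc n (m + 2) * partialHalfTwist n (m + 1)
        = sigmaAsc n (m + 1) * (s n (m + 2) * partialHalfTwist n m) * sigmaDesc n (m + 1) := by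
          rw [sigmaAsc_succ, partialHalfTwist_succ]; simp only [mul_assoc]
      _ = sigmaAsc n (m + 1) * partialHalfTwist n m * (s n (m + 2) * sigmaDesc n (m + 1)) := by
          rw [(commute_s_partialHalfTwist le_rfl).eq]; simp only [mul_assoc]
      _ = partialHalfTwist n (m + 1) * sigmaDesc n (m + 2) := by
          rw [ih, ← sigmaDesc_succ, partialHalfTwist_succ]

lemma partialHalfTwist_succ' (m : ℕ) :
    partialHalfTwist n (m + 1) = sigmaAsc n (m + 1) * partialHalfTwist n m := by
  rw [sigmaAsc_mul_partialHalfTwist, partialHalfTwist_succ]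

lemma s_mul_partialHalfTwist {i m : ℕ} (h1 : 1 ≤ i) (h2 : i ≤ m) (h3 : m ≤ n - 1) :
    s n i * partialHalfTwist n m = partialHalfTwist n m * s n (m + 1 - i) := by
  induction m generalizing i with
  | zero => omega
  | succ m ih =>
    rcases Nat.lt_or_ge m i with hi | hi
    · obtain rfl : i = m + 1 := by omega
      rcases Nat.eq_zero_or_pos m with rfl | hm
      · simp [partialHalfTwist_succ, sigmaDesc_succ]
      obtain ⟨k, rfl⟩ : ∃ k, m = k + 1 := ⟨m - 1, by omega⟩
      rw [partialHalfTwist_succ', ← mul_assoc, s_mul_sigmaAsc k h3, mul_assoc,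
        ih (by omega) le_rfl (by omega), ← mul_assoc]
      simp only [Nat.add_sub_cancel_left]
    · rw [partialHalfTwist_succ, ← mul_assoc, ih h1 hi (by omega), mul_assoc,
        s_mul_sigmaDesc (by omega) (by omega) h3, ← mul_assoc,
        show m + 1 - i + 1 = m + 1 + 1 - i by omega]

lemma sigmaDesc_mem_positive {m : ℕ} (h : m ≤ n - 1) : sigmaDesc n m ∈ positive n :=
  Submonoid.list_prod_mem _ <| by
    simpa using fun k hk => s_mem_positive (by omega) (by omega)

lemma sigmaAsc_mem_positive {m : ℕ} (h : m ≤ n - 1) : sigmaAsc n m ∈ positive n :=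
  Submonoid.list_prod_mem _ <| by
    simpa using fun k hk => s_mem_positive (by omega) (by omega)

lemma partialHalfTwist_mem_positive {m : ℕ} (h : m ≤ n - 1) :
    partialHalfTwist n m ∈ positive n :=
  Submonoid.list_prod_mem _ <| by
    simpa using fun r hr => sigmaDesc_mem_positive (by omega)

lemma partialHalfTwist_mul_inv_s_mem_positive {j m : ℕ} (h1 : 1 ≤ j) (h2 : j ≤ m)
    (h3 : m ≤ n - 1) : partialHalfTwist n m * (s n j)⁻¹ ∈ positive n := by
  induction m generalizing j with
  | zero => omega
  | succ m ih =>
    rcases Nat.lt_or_ge m j with hj | hj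
    · obtain rfl : j = m + 1 := by omega
      rcases Nat.eq_zero_or_pos m with rfl | hm
      · simp [partialHalfTwist_succ, sigmaDesc_succ, one_mem]
      have h : sigmaDesc n (m + 1) * (s n (m + 1))⁻¹ = (s n m)⁻¹ * sigmaDesc n (m + 1) := by
        rw [mul_inv_eq_iff_eq_mul, mul_assoc, ← s_mul_sigmaDesc hm le_rfl h3, inv_mul_cancel_left]
      rw [partialHalfTwist_succ, mul_assoc, h, ← mul_assoc]
      exact mul_mem (ih hm le_rfl (by omega)) (sigmaDesc_mem_positive h3)
    · rw [partialHalfTwist_succ', mul_assoc]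
      exact mul_mem (sigmaAsc_mem_positive h3) (ih h1 hj (by omega))

lemma s_mul_halfTwist {i : ℕ} (h1 : 1 ≤ i) (h2 : i ≤ n - 1) :
    s n i * halfTwist n = halfTwist n * s n (n - i) := by
  rw [halfTwist_eq_partialHalfTwist, s_mul_partialHalfTwist h1 h2 le_rfl,
    show n - 1 + 1 - i = n - i by omega]

lemma commute_halfTwist_sq_s {i : ℕ} (h1 : 1 ≤ i) (h2 : i ≤ n - 1) :
    Commute (halfTwist n ^ 2) (s n i) := by
  have h := s_mul_halfTwist (n := n) (i := n - i) (by omega) (by omega)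
  rw [show n - (n - i) = i by omega] at h
  calc halfTwist n ^ 2 * s n i = halfTwist n * (halfTwist n * s n i) := by rw [sq, mul_assoc]
    _ = halfTwist n * s n (n - i) * halfTwist n := by rw [← h, mul_assoc]
    _ = s n i * halfTwist n ^ 2 := by rw [← s_mul_halfTwist h1 h2, sq, mul_assoc]

lemma commute_halfTwist_zpow_two_mul_s (k : ℤ) {i : ℕ} (h1 : 1 ≤ i) (h2 : i ≤ n - 1) :
    Commute (halfTwist n ^ (2 * k)) (s n i) := by
  rw [zpow_mul]
  exact_mod_cast (commute_halfTwist_sq_s h1 h2).zpow_left k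

lemma halfTwist_sq_mul_inv_s_mem_positive {i : ℕ} (h1 : 1 ≤ i) (h2 : i ≤ n - 1) :
    halfTwist n ^ 2 * (s n i)⁻¹ ∈ positive n := by
  rw [sq, mul_assoc]
  exact mul_mem (partialHalfTwist_mem_positive le_rfl)
    (partialHalfTwist_mul_inv_s_mem_positive h1 h2 le_rfl)

end

theorem exists_halfTwist_pow_mul_positive_general (n : ℕ) (X : BraidGroup n) :
    ∃ (k : ℤ) (M : BraidGroup n), M ∈ positive n ∧ X = halfTwist n ^ (2 * k) * M := by
  have hX : X ∈ Subgroup.closure (Set.range (PresentedGroup.of (rels := braidRels n))) := by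
    simp
  induction hX using Subgroup.closure_induction_left with
  | one => exact ⟨0, 1, one_mem _, by simp⟩
  | mul_left _ hx _ _ ih =>
    obtain ⟨j, rfl⟩ := hx
    obtain ⟨k, M, hM, rfl⟩ := ih
    refine ⟨k, s n (j + 1) * M, mul_mem (s_mem_positive (by omega) (by omega)) hM, ?_⟩
    rw [of_eq_s, ← mul_assoc,
      ← (commute_halfTwist_zpow_two_mul_s k (by omega) (by omega)).eq, mul_assoc]
  | inv_mul_cancel _ hx _ _ ih =>
    obtain ⟨j, rfl⟩ := hx
    obtain ⟨k, M, hM, rfl⟩ := ih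
    refine ⟨k - 1, halfTwist n ^ 2 * (s n (j + 1))⁻¹ * M,
      mul_mem (halfTwist_sq_mul_inv_s_mem_positive (by omega) (by omega)) hM, ?_⟩
    rw [of_eq_s, ← mul_assoc,
      ← (commute_halfTwist_zpow_two_mul_s k (by omega) (by omega)).inv_right.eq]
    group

/-- Every element `X` of `B_n` can be written `X = Δ^{2k}·M` with `k ∈ ℤ` and
`M` a positive braid. -/
theorem exists_halfTwist_pow_mul_positive (n : ℕ) (hn : 3 ≤ n) (X : BraidGroup n) :
    ∃ (k : ℤ) (M : BraidGroup n), M ∈ positive n ∧ X = halfTwist n ^ (2 * k) * M :=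
  exists_halfTwist_pow_mul_positive_general n X

end Braid
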